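/- Let H be a Hopf algebra over a field k with invertible antipode S, and let H̃ denote H with left H-coaction h ↦ h₍₁₎ ⊗ h₍₂₎ and right H^{op,cop}-coaction h ↦ h₍₁₎ ⊗ S⁻¹(h₍₂₎). Then the multiplication μ : H̃ ⊗ H̃ → H̃ and unit η : k → H̃ of H are morphisms of H-H^{op,cop}-bicomodules, so that H̃ is an algebra object in the category of H-H^{op,cop}-bicomodules. -/

import Mathlib

/-! Δ is an algebra map, so μ and η are morphisms for the left coaction Δ. For the right coaction
`(id ⊗ S⁻¹) ∘ Δ` the same computation goes through because S⁻¹, like S, reverses products, which is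
exactly what the opposite product in the diagonal right coaction asks for. -/

open TensorProduct

noncomputable section

variable {k : Type} [Field k] {H : Type} [Ring H] [HopfAlgebra k H]
variable {P Q : Type} [AddCommGroup P] [Module k P] [AddCommGroup Q] [Module k Q]

/-- Diagonal left `H`-coaction on a tensor product of two left `H`-comodules:
`p ⊗ q ↦ p₍₋₁₎ q₍₋₁₎ ⊗ p₍₀₎ ⊗ q₍₀₎`. -/
def lDiag (ρP : P →ₗ[k] H ⊗[k] P) (ρQ : Q →ₗ[k] H ⊗[k] Q) :
    (P ⊗[k] Q) →ₗ[k] H ⊗[k] (P ⊗[k] Q) :=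
  (TensorProduct.map (LinearMap.mul' k H) LinearMap.id)
    ∘ₗ (TensorProduct.tensorTensorTensorComm k H P H Q).toLinearMap
    ∘ₗ TensorProduct.map ρP ρQ

/-- Diagonal right `H^{op,cop}`-coaction on a tensor product of two right comodules, using the
opposite multiplication: `p ⊗ q ↦ p₍₀₎ ⊗ q₍₀₎ ⊗ q₍₁₎ p₍₁₎` (product in `H`). -/
def rDiag (ρP : P →ₗ[k] P ⊗[k] H) (ρQ : Q →ₗ[k] Q ⊗[k] H) :
    (P ⊗[k] Q) →ₗ[k] (P ⊗[k] Q) ⊗[k] H :=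
  (TensorProduct.map LinearMap.id ((LinearMap.mul' k H) ∘ₗ (TensorProduct.comm k H H).toLinearMap))
    ∘ₗ (TensorProduct.tensorTensorTensorComm k P H Q H).toLinearMap
    ∘ₗ TensorProduct.map ρP ρQ

open Coalgebra LinearMap

lemma map_mul_antidistrib_of_inverse {A B : Type*} [Mul A] [Mul B] {f : A → B} {g : B → A}
    (hf : ∀ x y, f (x * y) = f y * f x) (hgf : Function.LeftInverse g f)
    (hfg : Function.RightInverse g f) (x y : B) : g (x * y) = g y * g x := by
  rw [← hfg x, ← hfg y, ← hf, hgf, hgf, hgf]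

theorem Bialgebra.comul_comp_mul' {R A : Type*} [CommSemiring R] [Semiring A] [Bialgebra R A] :
    comul ∘ₗ mul' R A = mul' R (A ⊗[R] A) ∘ₗ map comul comul := by
  ext a b
  simp

theorem comul_comp_mul'_eq_lDiag :
    comul ∘ₗ mul' k H = map id (mul' k H) ∘ₗ lDiag (comul (R := k)) (comul (R := k)) := by
  rw [Bialgebra.comul_comp_mul', mul'_tensor, lDiag, ← comp_assoc, ← map_comp]
  rfl

theorem comul_comp_mul'_eq_rDiag {φ : H →ₗ[k] H} (hφ : ∀ x y, φ (x * y) = φ y * φ x) :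
    (map id φ ∘ₗ comul) ∘ₗ mul' k H
      = map (mul' k H) id ∘ₗ rDiag (map id φ ∘ₗ comul (R := k)) (map id φ ∘ₗ comul (R := k)) := by
  calc (map id φ ∘ₗ comul) ∘ₗ mul' k H
      = map (mul' k H) (φ ∘ₗ mul' k H) ∘ₗ (tensorTensorTensorComm k H H H H).toLinearMap
          ∘ₗ map comul comul := by
        rw [comp_assoc, Bialgebra.comul_comp_mul', mul'_tensor, ← comp_assoc, ← comp_assoc,
          ← map_comp]
        rfl
    _ = _ := by
        rw [rDiag, map_comp]
        simp only [← comp_assoc]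
        congr 1
        exact ext_fourfold' fun _ _ _ _ => by simp [hφ]

theorem Htilde_algebra_in_bicomodules
    (k H : Type) [Field k] [Ring H] [HopfAlgebra k H]
    (S' : H →ₗ[k] H)
    (hS'₁ : S' ∘ₗ HopfAlgebra.antipode (R := k) = LinearMap.id)
    (hS'₂ : HopfAlgebra.antipode (R := k) ∘ₗ S' = LinearMap.id) :
    -- the multiplication of H is a morphism of left H-comodules
    (Coalgebra.comul (R := k) ∘ₗ LinearMap.mul' k H
      = (TensorProduct.map LinearMap.id (LinearMap.mul' k H)) ∘ₗ
          lDiag (Coalgebra.comul (R := k)) (Coalgebra.comul (R := k)))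
    -- the multiplication of H is a morphism of right H^{op,cop}-comodules
    ∧ (((TensorProduct.map LinearMap.id S') ∘ₗ Coalgebra.comul (R := k)) ∘ₗ LinearMap.mul' k H
      = (TensorProduct.map (LinearMap.mul' k H) LinearMap.id) ∘ₗ
          rDiag ((TensorProduct.map LinearMap.id S') ∘ₗ Coalgebra.comul (R := k))
            ((TensorProduct.map LinearMap.id S') ∘ₗ Coalgebra.comul (R := k)))
    -- the unit of H is a morphism of bicomodules from the trivial bicomodule k
    ∧ (Coalgebra.comul (R := k) (1 : H) = (1 : H) ⊗ₜ[k] (1 : H))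
    ∧ (((TensorProduct.map LinearMap.id S') ∘ₗ Coalgebra.comul (R := k)) (1 : H)
        = (1 : H) ⊗ₜ[k] (1 : H)) := by
  have hS'S : Function.LeftInverse S' (HopfAlgebra.antipode k) := LinearMap.congr_fun hS'₁
  have hSS' : Function.RightInverse S' (HopfAlgebra.antipode k) := LinearMap.congr_fun hS'₂
  have hS'_one : S' 1 = 1 := by simpa using hS'S 1
  refine ⟨comul_comp_mul'_eq_lDiag, comul_comp_mul'_eq_rDiag
    (map_mul_antidistrib_of_inverse HopfAlgebra.antipode_mul_antidistrib hS'S hSS'), ?_, ?_⟩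
  · simp [Algebra.TensorProduct.one_def]
  · simp [Algebra.TensorProduct.one_def, hS'_one]
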